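/- Let A_λ be as above with λ = 0 (i.e., A = kQ/I with relations x1 y_{j-1} = x0 y_j and y_j x0 = y_{j-1} x1, 1 ≤ j ≤ k-1). Then the multiplication map A e0 ⊗_{e0 A e0} e0 A → A is not surjective; specifically e1 is not in its image. -/
import Mathlib


/-!
STATEMENT 6: For the algebra A = kQ/I on the quiver with two vertices 0, 1
(idempotents e0, e1), arrows x0, x1 : 0 → 1 and y0, ..., y_{K-1} : 1 → 0, with
relations x1 y_{j-1} = x0 y_j and y_j x0 = y_{j-1} x1 for 1 ≤ j ≤ K-1 (the case
λ = 0), the multiplication map A e0 ⊗_{e0 A e0} e0 A → A is not surjective: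
e1 is not in its image (the k-linear span of all products a·e0·b).
-/

inductive QG (K : ℕ) : Type
  | E0 : QG K
  | E1 : QG K
  | X : Fin 2 → QG K
  | Y : Fin K → QG K

variable (k : Type) [Field k] [IsAlgClosed k] [CharZero k] (K : ℕ)

noncomputable abbrev gE0 : FreeAlgebra k (QG K) := FreeAlgebra.ι k QG.E0
noncomputable abbrev gE1 : FreeAlgebra k (QG K) := FreeAlgebra.ι k QG.E1
noncomputable abbrev gX (i : Fin 2) : FreeAlgebra k (QG K) := FreeAlgebra.ι k (QG.X i)
noncomputable abbrev gY (j : Fin K) : FreeAlgebra k (QG K) := FreeAlgebra.ι k (QG.Y j)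

/-- The relations of the path algebra of the quiver (vertex idempotents and
incidence relations, with paths composed diagrammatically) together with the
relations x1 y_{j-1} = x0 y_j and y_j x0 = y_{j-1} x1. -/
inductive ARel : FreeAlgebra k (QG K) → FreeAlgebra k (QG K) → Prop
  | idem0 : ARel (gE0 k K * gE0 k K) (gE0 k K)
  | idem1 : ARel (gE1 k K * gE1 k K) (gE1 k K)
  | orth01 : ARel (gE0 k K * gE1 k K) 0
  | orth10 : ARel (gE1 k K * gE0 k K) 0
  | sum : ARel (gE0 k K + gE1 k K) 1
  | xpath (i : Fin 2) : ARel (gE0 k K * gX k K i * gE1 k K) (gX k K i)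
  | ypath (j : Fin K) : ARel (gE1 k K * gY k K j * gE0 k K) (gY k K j)
  | defrel1 (i : ℕ) (h : i + 1 < K) :
      ARel (gX k K 1 * gY k K ⟨i, by omega⟩) (gX k K 0 * gY k K ⟨i + 1, h⟩)
  | defrel2 (i : ℕ) (h : i + 1 < K) :
      ARel (gY k K ⟨i + 1, h⟩ * gX k K 0) (gY k K ⟨i, by omega⟩ * gX k K 1)

/-- The algebra A_λ. -/
noncomputable abbrev QAlg := RingQuot (ARel k K)

noncomputable abbrev aE0 : QAlg k K := RingQuot.mkAlgHom k (ARel k K) (gE0 k K)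


noncomputable abbrev aE1 : QAlg k K := RingQuot.mkAlgHom k (ARel k K) (gE1 k K)

/-- Evaluation: E0 ↦ 0, E1 ↦ 1, arrows ↦ 0. -/
noncomputable def evalMap : QAlg k K →ₐ[k] k := by
  refine RingQuot.liftAlgHom k (s := ARel k K)
    ⟨FreeAlgebra.lift k (fun g => match g with
      | QG.E0 => (0 : k) | QG.E1 => 1 | QG.X _ => 0 | QG.Y _ => 0), ?_⟩
  intro a b h
  induction h <;> simp [FreeAlgebra.lift_ι_apply]

/-- The multiplication map A e0 ⊗_{e0Ae0} e0 A → A is not surjective: e1 is not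
in its image, the span of all products a·e0·b. -/
theorem mult_map_not_surjective (hK : 2 ≤ K) :
    aE1 k K ∉ Submodule.span k {z : QAlg k K | ∃ a b, z = a * aE0 k K * b} := by
  intro hmem
  have h0 : evalMap k K (aE0 k K) = 0 := by
    simp [evalMap, aE0, RingQuot.liftAlgHom_mkAlgHom_apply, FreeAlgebra.lift_ι_apply]
  have h1 : evalMap k K (aE1 k K) = 1 := by
    simp [evalMap, aE1, RingQuot.liftAlgHom_mkAlgHom_apply, FreeAlgebra.lift_ι_apply]
  have hz : ∀ z ∈ Submodule.span k {z : QAlg k K | ∃ a b, z = a * aE0 k K * b},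
      evalMap k K z = 0 := by
    intro z hzmem
    induction hzmem using Submodule.span_induction with
    | mem x hx => obtain ⟨a, b, rfl⟩ := hx; simp [h0]
    | zero => simp
    | add x y _ _ hx hy => simp [map_add, hx, hy]
    | smul c x _ hx => simp [map_smul, hx]
  have := hz _ hmem
  rw [h1] at this
  exact one_ne_zero this
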